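/- arXiv:1403.2578 — 4 statements merged into one kernel-verified Lean document; each statement's English description precedes it below -/
import Mathlib

section
/- Let H be the arcsine distribution on (−1,1), let y > 0, and define ψ(u) = −1/u + y ∫ t/(1 + t u) dH(t). Then for every real u with 0 < |u| < 1, ψ(u) = (y−1)/u − y/(u √(1 − u²)). -/
/-!
Since `t / (1 + t u) = (1 - 1 / (1 + t u)) / u`, the integral reduces to the mass of `H` and to
`∫ dH(t) / (1 + t u) = 1 / √(1 - u²)`. The latter has the primitive
`arcsin ((u + t) / (1 + u t)) / (π √(1 - u²))`, because the Möbius map `t ↦ (u + t) / (1 + u t)`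
fixes `±1` and `1 - ((u + t) / (1 + u t))² = (1 - u²)(1 - t²) / (1 + u t)²`. As the integrand is
nonnegative, its integrability near the singular endpoints comes with the primitive.
-/

open Real Set intervalIntegral

lemma one_add_mul_pos_of_abs_le_of_abs_lt {t u : ℝ} (ht : |t| ≤ 1) (hu : |u| < 1) :
    0 < 1 + t * u := by
  have : |t * u| < 1 := by
    rw [abs_mul]; nlinarith [abs_nonneg t, abs_nonneg u]
  linarith [neg_abs_le (t * u)]

lemma one_sub_sq_pos_of_abs_lt {u : ℝ} (hu : |u| < 1) : 0 < 1 - u ^ 2 :=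
  sub_pos.mpr ((sq_lt_one_iff_abs_lt_one u).mpr hu)

lemma one_sub_sq_mobius {u t : ℝ} (h : 1 + u * t ≠ 0) :
    1 - ((u + t) / (1 + u * t)) ^ 2 = (1 - u ^ 2) * (1 - t ^ 2) / (1 + u * t) ^ 2 := by
  field_simp
  ring

noncomputable def arcsineCauchyKernel (u t : ℝ) : ℝ := 1 / ((1 + t * u) * (π * √(1 - t ^ 2)))

noncomputable def arcsineCauchyPrimitive (u t : ℝ) : ℝ :=
  arcsin ((u + t) / (1 + u * t)) / (π * √(1 - u ^ 2))

section
variable {u : ℝ}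

lemma continuousOn_arcsineCauchyPrimitive (hu : |u| < 1) :
    ContinuousOn (arcsineCauchyPrimitive u) (Icc (-1) 1) := by
  have hden : ∀ t ∈ Icc (-1 : ℝ) 1, 1 + u * t ≠ 0 := fun t ht => by
    rw [mul_comm]; exact (one_add_mul_pos_of_abs_le_of_abs_lt (abs_le.mpr ht) hu).ne'
  have hmob : ContinuousOn (fun t => (u + t) / (1 + u * t)) (Icc (-1) 1) :=
    ContinuousOn.div (by fun_prop) (by fun_prop) hden
  exact (continuous_arcsin.comp_continuousOn hmob).div_const _

lemma hasDerivAt_arcsineCauchyPrimitive (hu : |u| < 1) {t : ℝ} (ht : t ∈ Ioo (-1) 1) :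
    HasDerivAt (arcsineCauchyPrimitive u) (arcsineCauchyKernel u t) t := by
  obtain ⟨ht1, ht2⟩ := ht
  have hc : 0 < 1 + u * t := by
    rw [mul_comm]; exact one_add_mul_pos_of_abs_le_of_abs_lt (abs_le.mpr ⟨ht1.le, ht2.le⟩) hu
  have hu2 := one_sub_sq_pos_of_abs_lt hu
  have ht2 : 0 < 1 - t ^ 2 := one_sub_sq_pos_of_abs_lt (abs_lt.mpr ⟨ht1, ht2⟩)
  have hmob : HasDerivAt (fun s => (u + s) / (1 + u * s)) ((1 - u ^ 2) / (1 + u * t) ^ 2) t := by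
    refine (((hasDerivAt_id' t).const_add u).div
      (((hasDerivAt_id' t).const_mul u).const_add 1) hc.ne').congr_deriv ?_
    field_simp
    ring
  have hpos : 0 < 1 - ((u + t) / (1 + u * t)) ^ 2 := by
    rw [one_sub_sq_mobius hc.ne']; positivity
  have hsqrt :
      √(1 - ((u + t) / (1 + u * t)) ^ 2) = √(1 - u ^ 2) * √(1 - t ^ 2) / (1 + u * t) := by
    rw [one_sub_sq_mobius hc.ne', sqrt_div' _ (sq_nonneg _), sqrt_mul hu2.le, sqrt_sq hc.le]
  have harcsin := (hasDerivAt_arcsin (by nlinarith) (by nlinarith)).comp t hmob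
  refine (harcsin.div_const (π * √(1 - u ^ 2))).congr_deriv ?_
  rw [hsqrt, arcsineCauchyKernel]
  field_simp
  rw [sq_sqrt hu2.le]

lemma arcsineCauchyKernel_nonneg (hu : |u| < 1) {t : ℝ} (ht : t ∈ Icc (-1) 1) :
    0 ≤ arcsineCauchyKernel u t := by
  have := one_add_mul_pos_of_abs_le_of_abs_lt (abs_le.mpr ht) hu
  unfold arcsineCauchyKernel
  positivity

lemma intervalIntegrable_arcsineCauchyKernel (hu : |u| < 1) :
    IntervalIntegrable (arcsineCauchyKernel u) MeasureTheory.volume (-1) 1 := by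
  refine intervalIntegrable_deriv_of_nonneg (g := arcsineCauchyPrimitive u) ?_ ?_ ?_
  all_goals norm_num only [min_eq_left, max_eq_right, uIcc_of_le]
  · exact continuousOn_arcsineCauchyPrimitive hu
  · exact fun t ht => hasDerivAt_arcsineCauchyPrimitive hu ht
  · exact fun t ht => arcsineCauchyKernel_nonneg hu (Ioo_subset_Icc_self ht)

lemma integral_arcsineCauchyKernel (hu : |u| < 1) :
    ∫ t in (-1 : ℝ)..1, arcsineCauchyKernel u t = 1 / √(1 - u ^ 2) := by
  have hu2 := one_sub_sq_pos_of_abs_lt hu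
  have hu' := abs_lt.mp hu
  rw [integral_eq_sub_of_hasDerivAt_of_le (by norm_num) (continuousOn_arcsineCauchyPrimitive hu)
    (fun t ht => hasDerivAt_arcsineCauchyPrimitive hu ht)
    (intervalIntegrable_arcsineCauchyKernel hu)]
  have h1 : (u + 1) / (1 + u * 1) = 1 := by
    rw [mul_one, add_comm, div_self (by linarith)]
  have h2 : (u + -1) / (1 + u * -1) = -1 := by
    rw [div_eq_iff (by linarith)]; ring
  simp only [arcsineCauchyPrimitive, h1, h2, arcsin_one, arcsin_neg_one]
  field_simp
  ring

end

lemma div_one_add_mul_eq_sub_arcsineCauchyKernel {u t : ℝ} (hu : u ≠ 0) (hut : 1 + t * u ≠ 0) :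
    t / ((1 + t * u) * (π * √(1 - t ^ 2))) =
      (arcsineCauchyKernel 0 t - arcsineCauchyKernel u t) / u := by
  unfold arcsineCauchyKernel
  rcases eq_or_ne (√(1 - t ^ 2)) 0 with h | h
  · simp [h]
  · field_simp
    ring

theorem psi_arcsine_formula_general (y : ℝ) (u : ℝ) (hu0 : 0 < |u|) (hu1 : |u| < 1) :
    -1 / u + y * ∫ t in (-1 : ℝ)..1, t / ((1 + t * u) * (π * Real.sqrt (1 - t ^ 2))) =
      (y - 1) / u - y / (u * Real.sqrt (1 - u ^ 2)) := by
  have hu : u ≠ 0 := abs_pos.mp hu0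
  have hsplit : EqOn (fun t => t / ((1 + t * u) * (π * √(1 - t ^ 2))))
      (fun t => (arcsineCauchyKernel 0 t - arcsineCauchyKernel u t) / u) (uIcc (-1) 1) :=
    fun t ht => div_one_add_mul_eq_sub_arcsineCauchyKernel hu
      (one_add_mul_pos_of_abs_le_of_abs_lt (abs_le.mpr (by simpa using ht)) hu1).ne'
  have habs0 : |(0 : ℝ)| < 1 := by norm_num
  rw [integral_congr hsplit, intervalIntegral.integral_div,
    integral_sub (intervalIntegrable_arcsineCauchyKernel habs0)
      (intervalIntegrable_arcsineCauchyKernel hu1),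
    integral_arcsineCauchyKernel habs0, integral_arcsineCauchyKernel hu1]
  have hsqrt : √(1 - u ^ 2) ≠ 0 := (sqrt_pos.mpr (one_sub_sq_pos_of_abs_lt hu1)).ne'
  rw [zero_pow two_ne_zero, sub_zero, sqrt_one]
  field_simp
  ring

/-- With `H` the arcsine distribution on `(−1,1)` and `y > 0`, the
function `ψ(u) = −1/u + y ∫ t/(1 + tu) dH(t)` satisfies, for `0 < |u| < 1`,
`ψ(u) = (y−1)/u − y/(u √(1 − u²))`. -/
theorem psi_arcsine_formula (y : ℝ) (hy : 0 < y) (u : ℝ) (hu0 : 0 < |u|) (hu1 : |u| < 1) :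
    -1 / u + y * ∫ t in (-1 : ℝ)..1, t / ((1 + t * u) * (π * Real.sqrt (1 - t ^ 2))) =
      (y - 1) / u - y / (u * Real.sqrt (1 - u ^ 2)) :=
  psi_arcsine_formula_general y u hu0 hu1
end

section
/- Let c > 0, let z be a nonzero complex number, and let y₀ be a real number with 1 + y₀ > 0 satisfying the cubic equation y₀³ − (((1−c)² − z²)/z²) y₀² − (4/z²) y₀ − 4/z² = 0. Let s = √(1+y₀) (the positive real square root), let ε ∈ {+1, −1}, and let w be any complex number with w² = ((1−c)/z − ε/s)² − y₀²/(1+y₀). Then m = ((1−c)/z + ε s + w)/(2c) satisfies the quartic equation (1 − c² m²)(c + c z m − 1)² = 1. In particular each of the four expressions m₁(z), m₂(z), m₃(z), m₄(z) obtained from the four choices of signs is a root of (1 − c² m²)(c + c z m − 1)² = 1. -/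
/-!
Ferrari's method. In the variable `M = c m`, with `a = (1 - c)/z` and `b = 1/z²`, the quartic
reads `(M² - 1)(M - a)² + b = 0` and the cubic is its resolvent
`y³ - (a² - 1)y² - 4by - 4b = 0`. For every square root `t` of `1 + y₀` the quartic then splits
into two quadratics `M² - (a ± t)M + (y₀ ± a(2 + y₀)/t)/2`, and the expressions `m` are the roots
of the first one for `t = ε √(1 + y₀)`, written by the quadratic formula (note `ε/√(1 + y₀) = 1/t`).
-/

namespace Ferrari

variable {K : Type*} [Field K]

def quadraticFactor (a y t M : K) : K :=
  2 * M ^ 2 - 2 * (a + t) * M + y + a * (2 + y) / t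

theorem four_mul_quartic_eq_mul {a b y t : K} (ht : t ^ 2 = 1 + y) (ht0 : t ≠ 0)
    (hy : y ^ 3 - (a ^ 2 - 1) * y ^ 2 - 4 * b * y - 4 * b = 0) (M : K) :
    4 * ((M ^ 2 - 1) * (M - a) ^ 2 + b) =
      quadraticFactor a y t M * quadraticFactor a y (-t) M := by
  obtain rfl : y = t ^ 2 - 1 := by rw [ht]; ring
  unfold quadraticFactor
  field_simp
  linear_combination (-1) * hy

theorem two_mul_quadraticFactor {a y t w M : K} (ht : t ^ 2 = 1 + y) (ht0 : t ≠ 0)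
    (hM : 2 * M = a + t + w) :
    2 * quadraticFactor a y t M = w ^ 2 - ((a - 1 / t) ^ 2 - y ^ 2 / t ^ 2) := by
  obtain rfl : y = t ^ 2 - 1 := by rw [ht]; ring
  obtain rfl : w = 2 * M - a - t := by rw [hM]; ring
  unfold quadraticFactor
  field_simp
  ring

variable [NeZero (2 : K)]

theorem quartic_eq_zero {a b y t w M : K} (ht : t ^ 2 = 1 + y) (ht0 : t ≠ 0)
    (hy : y ^ 3 - (a ^ 2 - 1) * y ^ 2 - 4 * b * y - 4 * b = 0)
    (hw : w ^ 2 = (a - 1 / t) ^ 2 - y ^ 2 / t ^ 2) (hM : 2 * M = a + t + w) :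
    (M ^ 2 - 1) * (M - a) ^ 2 + b = 0 := by
  have hfactor : quadraticFactor a y t M = 0 := by
    have h := two_mul_quadraticFactor ht ht0 hM
    rw [hw, sub_self] at h
    exact (mul_eq_zero.mp h).resolve_left two_ne_zero
  have h4 : (4 : K) ≠ 0 := by
    rw [show (4 : K) = 2 * 2 by norm_num]
    exact mul_ne_zero two_ne_zero two_ne_zero
  have h := four_mul_quartic_eq_mul ht ht0 hy M
  rw [hfactor, zero_mul] at h
  exact (mul_eq_zero.mp h).resolve_left h4

end Ferrari

/-- If `y₀` is a real root (with `1 + y₀ > 0`) of the cubic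
`y³ − ((1−c)² − z²)/z² · y² − (4/z²) y − 4/z² = 0` and
`m = ((1−c)/z + ε √(1+y₀) + w)/(2c)` where `ε = ±1` and
`w² = ((1−c)/z − ε/√(1+y₀))² − y₀²/(1+y₀)`, then `m` satisfies
`(1 − c² m²)(c + czm − 1)² = 1`.  In particular each of the four expressions
`m₁, m₂, m₃, m₄` is a root of this quartic. -/
theorem four_roots_of_quartic (c : ℝ) (hc : 0 < c) (z : ℂ) (hz : z ≠ 0)
    (y₀ : ℝ) (hy₀ : 0 < 1 + y₀)
    (hcubic : (y₀ : ℂ) ^ 3 - ((((1 : ℂ) - c) ^ 2 - z ^ 2) / z ^ 2) * (y₀ : ℂ) ^ 2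
        - (4 / z ^ 2) * (y₀ : ℂ) - 4 / z ^ 2 = 0)
    (ε : ℝ) (hε : ε = 1 ∨ ε = -1)
    (w : ℂ)
    (hw : w ^ 2 = (((1 : ℂ) - c) / z - (ε : ℂ) / (Real.sqrt (1 + y₀) : ℂ)) ^ 2
        - (y₀ : ℂ) ^ 2 / ((1 : ℂ) + (y₀ : ℂ)))
    (m : ℂ)
    (hm : m = (((1 : ℂ) - c) / z + (ε : ℂ) * (Real.sqrt (1 + y₀) : ℂ) + w) / (2 * c)) :
    (1 - (c : ℂ) ^ 2 * m ^ 2) * ((c : ℂ) + (c : ℂ) * z * m - 1) ^ 2 = 1 := by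
  set s : ℂ := (Real.sqrt (1 + y₀) : ℂ)
  have hs : s ^ 2 = 1 + y₀ := by
    simp only [s, ← Complex.ofReal_pow, Real.sq_sqrt hy₀.le, Complex.ofReal_add, Complex.ofReal_one]
  have hs0 : s ≠ 0 := Complex.ofReal_ne_zero.mpr (Real.sqrt_pos.mpr hy₀).ne'
  have hε2 : (ε : ℂ) ^ 2 = 1 := by rcases hε with rfl | rfl <;> norm_num
  have ht : ((ε : ℂ) * s) ^ 2 = 1 + y₀ := by rw [mul_pow, hε2, one_mul, hs]
  have ht0 : (ε : ℂ) * s ≠ 0 := by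
    refine mul_ne_zero (fun h => ?_) hs0
    simp [h] at hε2
  have hεs : (ε : ℂ) / s = 1 / ((ε : ℂ) * s) := by
    rw [eq_div_iff ht0]
    field_simp
    linear_combination hε2
  have hc0 : (c : ℂ) ≠ 0 := Complex.ofReal_ne_zero.mpr hc.ne'
  have hresolvent : (y₀ : ℂ) ^ 3 - (((1 - c) / z) ^ 2 - 1) * (y₀ : ℂ) ^ 2
      - 4 * (1 / z ^ 2) * y₀ - 4 * (1 / z ^ 2) = 0 := by
    field_simp at hcubic ⊢
    linear_combination hcubic
  have hw' : w ^ 2 = ((1 - c) / z - 1 / (ε * s)) ^ 2 - (y₀ : ℂ) ^ 2 / (ε * s) ^ 2 := by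
    rw [hw, hεs, ht]
  have hquartic := Ferrari.quartic_eq_zero (M := c * m) ht ht0 hresolvent hw'
    (by rw [hm]; field_simp)
  field_simp at hquartic
  linear_combination (-1) * hquartic
end

section
/- Let c > 0 with c ≠ 1. If c < 1, then the equation ((1−c)² − 1) y³ + y² + y − 1 = 0 has exactly one real solution y₁ with y₁ > 1; if c > 1, then this equation has exactly one real solution y₁ with 0 < y₁ < 1. -/
/-!
Substituting `t = 1 / y` turns the equation into `a = t³ - t² - t` with `a = (1 - c)² - 1`.
Since `t³ - t² - t` has derivative `(3t + 1)(t - 1)`, it decreases strictly on `[-1/3, 1]`,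
from `0` at `t = 0` to `-1` at `t = 1`, and increases strictly from `-1` to `∞` on `[1, ∞)`.
For `0 < c < 1` the value `a` lies in `(-1, 0)`, and for `c > 1` in `(-1, ∞)`, so it is
attained exactly once on the relevant range.
-/

open Set Filter

def cubic (a y : ℝ) : ℝ := a * y ^ 3 + y ^ 2 + y - 1

def recipCoeff (t : ℝ) : ℝ := t ^ 3 - t ^ 2 - t

lemma cubic_eq_zero_iff {a y : ℝ} (hy : y ≠ 0) : cubic a y = 0 ↔ recipCoeff y⁻¹ = a := by
  have key : cubic a y = (a - recipCoeff y⁻¹) * y ^ 3 := by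
    unfold cubic recipCoeff; field_simp; ring
  rw [key, mul_eq_zero, or_iff_left (pow_ne_zero 3 hy), sub_eq_zero, eq_comm]

lemma continuous_recipCoeff : Continuous recipCoeff := by
  unfold recipCoeff; fun_prop

lemma recipCoeff_sub_recipCoeff (s t : ℝ) :
    recipCoeff t - recipCoeff s = (t - s) * (s ^ 2 + s * t + t ^ 2 - s - t - 1) := by
  unfold recipCoeff; ring

lemma strictAntiOn_recipCoeff : StrictAntiOn recipCoeff (Icc (-1 / 3) 1) := by
  intro s ⟨hs, _⟩ t ⟨_, ht⟩ hst
  have : s ^ 2 + s * t + t ^ 2 - s - t - 1 < 0 := by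
    nlinarith [mul_nonneg (sub_nonneg.2 hs) (sub_nonneg.2 ht)]
  nlinarith [recipCoeff_sub_recipCoeff s t, mul_neg_of_pos_of_neg (sub_pos.2 hst) this]

lemma strictMonoOn_recipCoeff : StrictMonoOn recipCoeff (Ici 1) := by
  intro s (hs : 1 ≤ s) t _ hst
  have : 0 < s ^ 2 + s * t + t ^ 2 - s - t - 1 := by
    nlinarith [mul_nonneg (sub_nonneg.2 hs) (sub_nonneg.2 hst.le)]
  nlinarith [recipCoeff_sub_recipCoeff s t, mul_pos (sub_pos.2 hst) this]

lemma tendsto_recipCoeff_atTop : Tendsto recipCoeff atTop atTop := by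
  refine tendsto_atTop_mono' _ ?_ tendsto_id
  filter_upwards [eventually_ge_atTop 2] with t ht
  show t ≤ t ^ 3 - t ^ 2 - t
  have hfac : 0 ≤ t * (t - 2) * (t + 1) :=
    mul_nonneg (mul_nonneg (by linarith) (by linarith)) (by linarith)
  linarith [show t ^ 3 - t ^ 2 - t - t = t * (t - 2) * (t + 1) by ring]

lemma existsUnique_cubic_eq_zero_one_lt {a : ℝ} (h₁ : -1 < a) (h₀ : a < 0) :
    ∃! y, 1 < y ∧ cubic a y = 0 := by
  have hmem (y : ℝ) :
      1 < y ∧ cubic a y = 0 ↔ y⁻¹ ∈ Ioo 0 1 ∧ recipCoeff y⁻¹ = a := by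
    rw [mem_Ioo, ← one_lt_inv_iff₀, inv_inv]
    exact and_congr_right fun hy => cubic_eq_zero_iff (zero_lt_one.trans hy).ne'
  rw [(Equiv.inv ℝ).existsUnique_congr
    (q := fun t => t ∈ Ioo 0 1 ∧ recipCoeff t = a) hmem]
  obtain ⟨t, ht, rfl⟩ : a ∈ recipCoeff '' Ioo 0 1 :=
    intermediate_value_Ioo' zero_le_one continuous_recipCoeff.continuousOn
      ⟨by norm_num [recipCoeff, h₁], by norm_num [recipCoeff, h₀]⟩
  have hsub : Ioo (0 : ℝ) 1 ⊆ Icc (-1 / 3) 1 := fun s hs => ⟨by linarith [hs.1], hs.2.le⟩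
  exact ⟨t, ⟨ht, rfl⟩, fun s ⟨hs, hst⟩ =>
    strictAntiOn_recipCoeff.injOn (hsub hs) (hsub ht) hst⟩

lemma existsUnique_cubic_eq_zero_mem_Ioo {a : ℝ} (h₁ : -1 < a) :
    ∃! y, (0 < y ∧ y < 1) ∧ cubic a y = 0 := by
  have hmem (y : ℝ) :
      (0 < y ∧ y < 1) ∧ cubic a y = 0 ↔ y⁻¹ ∈ Ioi 1 ∧ recipCoeff y⁻¹ = a := by
    rw [mem_Ioi, one_lt_inv_iff₀]
    exact and_congr_right fun hy => cubic_eq_zero_iff hy.1.ne'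
  rw [(Equiv.inv ℝ).existsUnique_congr
    (q := fun t => t ∈ Ioi 1 ∧ recipCoeff t = a) hmem]
  obtain ⟨t, ht, rfl⟩ : a ∈ recipCoeff '' Ici 1 :=
    intermediate_value_Ici continuous_recipCoeff.continuousOn tendsto_recipCoeff_atTop
      (by norm_num [recipCoeff, h₁.le])
  have ht1 : 1 < t := (mem_Ici.1 ht).lt_of_ne (by rintro rfl; norm_num [recipCoeff] at h₁)
  exact ⟨t, ⟨ht1, rfl⟩, fun s ⟨hs, hst⟩ =>
    strictMonoOn_recipCoeff.injOn (Ioi_subset_Ici_self hs) ht hst⟩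

theorem cubic_unique_root_general (c : ℝ) (hc : 0 < c) :
    (c < 1 → ∃! y : ℝ, 1 < y ∧
      ((1 - c) ^ 2 - 1) * y ^ 3 + y ^ 2 + y - 1 = 0) ∧
    (1 < c → ∃! y : ℝ, (0 < y ∧ y < 1) ∧
      ((1 - c) ^ 2 - 1) * y ^ 3 + y ^ 2 + y - 1 = 0) :=
  ⟨fun hc1 => existsUnique_cubic_eq_zero_one_lt (by nlinarith) (by nlinarith),
    fun hc1 => existsUnique_cubic_eq_zero_mem_Ioo (by nlinarith)⟩

/-- For `c > 0`, `c ≠ 1`: if `c < 1` the cubic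
`((1−c)² − 1) y³ + y² + y − 1 = 0` has exactly one real root `y₁ > 1`, and if
`c > 1` it has exactly one real root `y₁ ∈ (0,1)`. -/
theorem cubic_unique_root (c : ℝ) (hc : 0 < c) (hc1 : c ≠ 1) :
    (c < 1 → ∃! y : ℝ, 1 < y ∧
      ((1 - c) ^ 2 - 1) * y ^ 3 + y ^ 2 + y - 1 = 0) ∧
    (1 < c → ∃! y : ℝ, (0 < y ∧ y < 1) ∧
      ((1 - c) ^ 2 - 1) * y ^ 3 + y ^ 2 + y - 1 = 0) :=
  cubic_unique_root_general c hc
end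

section
/- Let S and T be n×n complex matrices such that S is Hermitian positive semidefinite and T is Hermitian. Then every eigenvalue of the (in general non-Hermitian) product matrix S T is real; that is, every root of the characteristic polynomial det(λ I_n − S T) in ℂ is a real number. -/
open Matrix ComplexOrder
open scoped MatrixOrder

namespace Matrix

variable {n 𝕜 : Type*} [Fintype n] [DecidableEq n] [RCLike 𝕜]

theorem IsHermitian.exists_eq_ofReal_of_isRoot_charpoly {A : Matrix n n 𝕜} (hA : A.IsHermitian)
    {μ : 𝕜} (hμ : A.charpoly.IsRoot μ) : ∃ r : ℝ, μ = r := by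
  have hmem : μ ∈ A.charpoly.roots := (Polynomial.mem_roots (charpoly_monic A).ne_zero).2 hμ
  rw [hA.roots_charpoly_eq_eigenvalues] at hmem
  obtain ⟨i, -, rfl⟩ := Multiset.mem_map.1 hmem
  exact ⟨hA.eigenvalues i, rfl⟩

theorem PosSemidef.charpoly_mul_eq_charpoly_sqrt_mul_mul_sqrt {S : Matrix n n 𝕜}
    (hS : S.PosSemidef) (T : Matrix n n 𝕜) :
    (S * T).charpoly = (CFC.sqrt S * T * CFC.sqrt S).charpoly := by
  conv_lhs => rw [← CFC.sqrt_mul_sqrt_self S hS.nonneg, Matrix.mul_assoc, charpoly_mul_comm]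

theorem PosSemidef.exists_eq_ofReal_of_isRoot_charpoly_mul {S T : Matrix n n 𝕜}
    (hS : S.PosSemidef) (hT : T.IsHermitian) {μ : 𝕜} (hμ : (S * T).charpoly.IsRoot μ) :
    ∃ r : ℝ, μ = r := by
  have hsqrt : (CFC.sqrt S).IsHermitian := (CFC.sqrt_nonneg S).posSemidef.isHermitian
  have hconj : (CFC.sqrt S * T * CFC.sqrt S).IsHermitian := by
    simpa only [hsqrt.eq] using isHermitian_mul_mul_conjTranspose (CFC.sqrt S) hT
  rw [hS.charpoly_mul_eq_charpoly_sqrt_mul_mul_sqrt] at hμ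
  exact hconj.exists_eq_ofReal_of_isRoot_charpoly hμ

end Matrix

/-- If `S` is Hermitian positive semidefinite and `T` is Hermitian,
then every eigenvalue of the (generally non-Hermitian) product `S * T` is real:
every complex root of `det(λ I − S T)` is real. -/
theorem eigenvalues_product_psd_hermitian_real {n : ℕ}
    (S T : Matrix (Fin n) (Fin n) ℂ)
    (hS : S.PosSemidef) (hT : T.IsHermitian) :
    ∀ μ : ℂ, (μ • (1 : Matrix (Fin n) (Fin n) ℂ) - S * T).det = 0 → ∃ r : ℝ, μ = (r : ℂ) := by
  intro μ hμ
  refine hS.exists_eq_ofReal_of_isRoot_charpoly_mul hT ?_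
  rwa [Polynomial.IsRoot, eval_charpoly, scalar_apply, ← smul_one_eq_diagonal]
end
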